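/- Let Λ ⊂ ℂ be a lattice, let ℓ = 2n+1 be odd (n ≥ 0), and let p₁, …, p_ℓ ∈ ℂ be points that are pairwise distinct modulo Λ (p_i − p_j ∉ Λ for i ≠ j). Set ζ_{ij} = ζ(p_i − p_j) and ℘_i = Σ_{j≠i} ℘(p_i − p_j). Then the set of tuples (A₁, …, A_ℓ, B) ∈ ℂ^{ℓ+1} satisfying Σ_{i=1}^ℓ A_i = 0 and, for every i = 1, …, ℓ, A_i² = Σ_{j≠i} ζ_{ij} A_j + B + (3/4)℘_i, is finite and has cardinality at most 2^{ℓ−1}. -/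

import Mathlib

noncomputable section

/-- The lattice point `m ω₁ + n ω₂` attached to an integer pair. -/
def latPt (ω₁ ω₂ : ℂ) (p : ℤ × ℤ) : ℂ := p.1 * ω₁ + p.2 * ω₂

/-- Membership in the lattice `Λ = ℤω₁ + ℤω₂`. -/
def IsLatticePt (ω₁ ω₂ z : ℂ) : Prop := ∃ m n : ℤ, z = m * ω₁ + n * ω₂

/-- The Weierstrass `℘`-function of the lattice `ℤω₁ + ℤω₂`. -/
def wp (ω₁ ω₂ : ℂ) (z : ℂ) : ℂ :=
  1 / z ^ 2 + ∑' p : {p : ℤ × ℤ // p ≠ 0},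
    (1 / (z - latPt ω₁ ω₂ p.1) ^ 2 - 1 / (latPt ω₁ ω₂ p.1) ^ 2)

/-- The Weierstrass `ζ`-function of the lattice `ℤω₁ + ℤω₂`. -/
def wzeta (ω₁ ω₂ : ℂ) (z : ℂ) : ℂ :=
  1 / z + ∑' p : {p : ℤ × ℤ // p ≠ 0},
    (1 / (z - latPt ω₁ ω₂ p.1) + 1 / latPt ω₁ ω₂ p.1 + z / (latPt ω₁ ω₂ p.1) ^ 2)

/-- The derivative `℘'` of the Weierstrass `℘`-function. -/
def wpDeriv (ω₁ ω₂ : ℂ) : ℂ → ℂ := deriv (wp ω₁ ω₂)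

/-- The set of log-free parameters `(A₁,…,A_ℓ, B)` for the primitive generalized Lamé
equation with singular points `p₁,…,p_ℓ`:
`Σ A_i = 0` and `A_i² = Σ_{j≠i} ζ(p_i−p_j) A_j + B + (3/4) Σ_{j≠i} ℘(p_i−p_j)` for all `i`. -/
def logFreeSet (ω₁ ω₂ : ℂ) (ℓ : ℕ) (p : Fin ℓ → ℂ) : Set ((Fin ℓ → ℂ) × ℂ) :=
  {AB | (∑ i, AB.1 i) = 0 ∧
    ∀ i, (AB.1 i) ^ 2 =
      (∑ j ∈ Finset.univ.erase i, wzeta ω₁ ω₂ (p i - p j) * AB.1 j) + AB.2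
        + (3 / 4) * ∑ j ∈ Finset.univ.erase i, wp ω₁ ω₂ (p i - p j)}

/-!
Put `y_i = A_i - A_ℓ` for `i < ℓ`. On the hyperplane `∑ A = 0` one has `A_ℓ = -(∑ y) / ℓ`, so `A`
is a linear function of `y`, and subtracting the `ℓ`-th equation from the `i`-th one gives
`y_i² = (2/ℓ) (∑ y) y_i + b_i(y)` with `b_i` affine; `B` is then read off from the `ℓ`-th equation.
On the solutions of such a system, multiplying a squarefree monomial `y_S` by `∑ y` or by a
coordinate yields a combination of squarefree monomials, because the relation one gets can be
solved for `(∑ y) y_S` as long as `1 - (2/ℓ) |S| ≠ 0`, which holds as `ℓ` is odd. So the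
`2^(ℓ-1)` squarefree monomials span every polynomial function on the solution set, while on a
finite set polynomials interpolate every function.
-/

open Finset Module

namespace MvPolynomial

variable {σ K : Type*} [Field K]

theorem exists_eval_eq_one_eval_eq_zero (u t : σ → K) :
    ∃ f : MvPolynomial σ K, eval u f = 1 ∧ (t ≠ u → eval t f = 0) := by
  by_cases h : t = u
  · exact ⟨1, map_one _, fun htu => absurd h htu⟩
  obtain ⟨i, hi⟩ := Function.ne_iff.mp h
  refine ⟨C (u i - t i)⁻¹ * (X i - C (t i)), ?_, fun _ => ?_⟩
  · simp [inv_mul_cancel₀ (sub_ne_zero.mpr hi.symm)]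
  · simp

theorem exists_eval_eq_of_finite (G : Set (σ → K)) [Finite G] (v : G → K) :
    ∃ f : MvPolynomial σ K, ∀ y : G, eval (y : σ → K) f = v y := by
  classical
  cases nonempty_fintype G
  choose e he using fun u t : G => exists_eval_eq_one_eval_eq_zero (u : σ → K) t
  refine ⟨∑ u : G, C (v u) * ∏ t ∈ univ.erase u, e u t, fun y => ?_⟩
  rw [map_sum, sum_eq_single y]
  · rw [map_mul, eval_C, map_prod, prod_eq_one fun t _ => (he y t).1, mul_one]
  · intro u _ hu
    rw [map_mul, map_prod, prod_eq_zero (mem_erase.mpr ⟨hu.symm, mem_univ y⟩)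
      ((he u y).2 (Subtype.coe_injective.ne hu.symm)), mul_zero]
  · exact fun h => absurd (mem_univ y) h

end MvPolynomial

section SquareSystem

variable {K : Type*} [Field K] {k : ℕ}

theorem mul_prod_of_sq_eq {c : K} {b y : Fin k → K}
    (hy : ∀ i, y i ^ 2 = c * (∑ j, y j) * y i + b i) {S : Finset (Fin k)} {i : Fin k}
    (hi : i ∈ S) :
    y i * ∏ j ∈ S, y j = c * (∑ j, y j) * ∏ j ∈ S, y j + b i * ∏ j ∈ S.erase i, y j := by
  rw [← mul_prod_erase S y hi]
  linear_combination (∏ j ∈ S.erase i, y j) * hy i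

theorem one_sub_mul_sum_mul_prod_of_sq_eq {c : K} {b y : Fin k → K}
    (hy : ∀ i, y i ^ 2 = c * (∑ j, y j) * y i + b i) (S : Finset (Fin k)) :
    (1 - c * #S) * ((∑ j, y j) * ∏ j ∈ S, y j) =
      ∑ j ∈ S, b j * ∏ i ∈ S.erase j, y i + ∑ j ∈ Sᶜ, ∏ i ∈ insert j S, y i := by
  have hin : ∑ j ∈ S, y j * ∏ i ∈ S, y i =
      #S * (c * (∑ j, y j) * ∏ i ∈ S, y i) + ∑ j ∈ S, b j * ∏ i ∈ S.erase j, y i := by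
    rw [sum_congr rfl fun j hj => mul_prod_of_sq_eq hy hj, sum_add_distrib, sum_const,
      nsmul_eq_mul]
  have hout : ∑ j ∈ Sᶜ, y j * ∏ i ∈ S, y i = ∑ j ∈ Sᶜ, ∏ i ∈ insert j S, y i :=
    sum_congr rfl fun j hj => (prod_insert (mem_compl.mp hj)).symm
  have hsplit := sum_add_sum_compl S fun j => y j * ∏ i ∈ S, y i
  rw [hin, hout, ← sum_mul] at hsplit
  linear_combination -hsplit

variable (G : Set (Fin k → K))

def coordOn (i : Fin k) : G → K := fun y => (y : Fin k → K) i

def squarefreeSpan : Submodule K (G → K) :=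
  Submodule.span K (Set.range fun S : Finset (Fin k) => ∏ i ∈ S, coordOn G i)

theorem prod_coordOn_mem_squarefreeSpan (S : Finset (Fin k)) :
    ∏ i ∈ S, coordOn G i ∈ squarefreeSpan G :=
  Submodule.subset_span ⟨S, rfl⟩

theorem finrank_squarefreeSpan_le : finrank K (squarefreeSpan G) ≤ 2 ^ k := by
  have h := finrank_range_le_card (R := K) fun S : Finset (Fin k) => ∏ i ∈ S, coordOn G i
  rwa [Fintype.card_finset, Fintype.card_fin] at h

theorem affine_mul_mem_of_coordOn_mul_mem {W : Submodule K (G → K)} (φ : (Fin k → K) →ₗ[K] K)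
    (γ : K) {w : G → K} (hw : w ∈ W) (hcoord : ∀ j, coordOn G j * w ∈ W) :
    (fun y : G => φ y + γ) * w ∈ W := by
  have h : (fun y : G => φ y + γ) * w =
      ∑ j, φ (fun i => if j = i then 1 else 0) • (coordOn G j * w) + γ • w := by
    ext y
    simp [φ.pi_apply_eq_sum_univ (y : Fin k → K), coordOn, add_mul, sum_mul, mul_assoc,
      mul_left_comm]
  rw [h]
  exact add_mem (sum_mem fun j _ => W.smul_mem _ (hcoord j)) (W.smul_mem _ hw)

variable {G} {c : K} (hc : ∀ m ≤ k, c * m ≠ 1) (φ : Fin k → (Fin k → K) →ₗ[K] K)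
  (γ : Fin k → K) (hG : ∀ y ∈ G, ∀ i, y i ^ 2 = c * (∑ j, y j) * y i + φ i y + γ i)

include hc hG

theorem coordOn_mul_prod_mem_squarefreeSpan (S : Finset (Fin k)) (i : Fin k) :
    coordOn G i * ∏ j ∈ S, coordOn G j ∈ squarefreeSpan G := by
  induction S using Finset.strongInduction generalizing i with
  | H S ih =>
  have hy : ∀ y : G, ∀ i, (y : Fin k → K) i ^ 2 =
      c * (∑ j, (y : Fin k → K) j) * (y : Fin k → K) i + (φ i y + γ i) := fun y i => by
    rw [hG y y.2 i, add_assoc]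
  set b : Fin k → G → K := fun j y => φ j y + γ j
  have hb : ∀ j ∈ S, b j * ∏ i ∈ S.erase j, coordOn G i ∈ squarefreeSpan G := fun j hj =>
    affine_mul_mem_of_coordOn_mul_mem G (φ j) (γ j) (prod_coordOn_mem_squarefreeSpan G _)
      fun i => ih _ (erase_ssubset hj) i
  have hσ : (∑ j, coordOn G j) * ∏ j ∈ S, coordOn G j ∈ squarefreeSpan G := by
    have hne : 1 - c * #S ≠ 0 :=
      sub_ne_zero.mpr (hc _ ((card_le_univ S).trans_eq (Fintype.card_fin k))).symm
    have h : (∑ j, coordOn G j) * ∏ j ∈ S, coordOn G j = (1 - c * #S)⁻¹ •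
        (∑ j ∈ S, b j * ∏ i ∈ S.erase j, coordOn G i +
          ∑ j ∈ Sᶜ, ∏ i ∈ insert j S, coordOn G i) := by
      rw [eq_inv_smul_iff₀ hne]
      ext y
      simpa [coordOn, b, Finset.sum_apply, Finset.prod_apply] using
        one_sub_mul_sum_mul_prod_of_sq_eq (hy y) S
    rw [h]
    exact Submodule.smul_mem _ _ (add_mem (sum_mem hb)
      (sum_mem fun j _ => prod_coordOn_mem_squarefreeSpan G _))
  by_cases hi : i ∈ S
  · have h : coordOn G i * ∏ j ∈ S, coordOn G j =
        c • ((∑ j, coordOn G j) * ∏ j ∈ S, coordOn G j) +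
          b i * ∏ j ∈ S.erase i, coordOn G j := by
      ext y
      simpa [coordOn, b, Finset.sum_apply, Finset.prod_apply, mul_assoc] using
        mul_prod_of_sq_eq (hy y) hi
    rw [h]
    exact add_mem (Submodule.smul_mem _ _ hσ) (hb i hi)
  · rw [← prod_insert hi]
    exact prod_coordOn_mem_squarefreeSpan G _

theorem coordOn_mul_mem_squarefreeSpan (i : Fin k) {w : G → K} (hw : w ∈ squarefreeSpan G) :
    coordOn G i * w ∈ squarefreeSpan G := by
  have h : squarefreeSpan G ≤ (squarefreeSpan G).comap (LinearMap.mulLeft K (coordOn G i)) :=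
    Submodule.span_le.mpr <| Set.range_subset_iff.mpr fun S =>
      coordOn_mul_prod_mem_squarefreeSpan hc φ γ hG S i
  exact h hw

theorem eval_mem_squarefreeSpan (f : MvPolynomial (Fin k) K) :
    (fun y : G => MvPolynomial.eval (y : Fin k → K) f) ∈ squarefreeSpan G := by
  induction f using MvPolynomial.induction_on with
  | C a =>
    have h : (fun y : G => MvPolynomial.eval (y : Fin k → K) (.C a)) =
        a • ∏ i ∈ ∅, coordOn G i := by
      ext; simp
    rw [h]
    exact Submodule.smul_mem _ _ (prod_coordOn_mem_squarefreeSpan G ∅)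
  | add p q hp hq =>
    simp only [map_add]
    exact add_mem hp hq
  | mul_X p i hp =>
    have h : (fun y : G => MvPolynomial.eval (y : Fin k → K) (p * .X i)) =
        coordOn G i * fun y : G => MvPolynomial.eval (y : Fin k → K) p := by
      ext; simp [coordOn, mul_comm]
    rw [h]
    exact coordOn_mul_mem_squarefreeSpan hc φ γ hG i hp

theorem squarefreeSpan_eq_top [Finite G] : squarefreeSpan G = ⊤ := by
  refine eq_top_iff.mpr fun v _ => ?_
  obtain ⟨f, hf⟩ := MvPolynomial.exists_eval_eq_of_finite G v
  rw [show v = fun y : G => MvPolynomial.eval (y : Fin k → K) f from funext fun y => (hf y).symm]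
  exact eval_mem_squarefreeSpan hc φ γ hG f

theorem ncard_le_of_sq_eq (hfin : G.Finite) : G.ncard ≤ 2 ^ k := by
  have := hfin.to_subtype
  cases nonempty_fintype G
  calc G.ncard = finrank K (G → K) := by
        rw [finrank_fintype_fun_eq_card, ← Nat.card_eq_fintype_card, Nat.card_coe_set_eq]
    _ = finrank K (squarefreeSpan G) := by rw [squarefreeSpan_eq_top hc φ γ hG, finrank_top]
    _ ≤ 2 ^ k := finrank_squarefreeSpan_le G

theorem finite_of_sq_eq : G.Finite := by
  by_contra hinf
  obtain ⟨t, htG, htfin, ht⟩ := Set.Infinite.exists_subset_ncard_eq hinf (2 ^ k + 1)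
  have hle := ncard_le_of_sq_eq hc φ γ (fun y hy => hG y (htG hy)) htfin
  exact Nat.not_succ_le_self _ (ht ▸ hle)

end SquareSystem

section SumZeroSystem

variable {K : Type*} [Field K] {k : ℕ}

def quadraticSolutions {ℓ : ℕ} (f : Fin ℓ → (Fin ℓ → K) →ₗ[K] K) (P : Fin ℓ → K) :
    Set ((Fin ℓ → K) × K) :=
  {AB | ∑ i, AB.1 i = 0 ∧ ∀ i, AB.1 i ^ 2 = f i AB.1 + AB.2 + P i}

def lastDiff (A : Fin (k + 1) → K) : Fin k → K := fun i => A i.castSucc - A (Fin.last k)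

theorem sum_lastDiff {A : Fin (k + 1) → K} (hA : ∑ i, A i = 0) :
    ∑ i, lastDiff A i = -(k + 1) * A (Fin.last k) := by
  rw [Fin.sum_univ_castSucc] at hA
  simp only [lastDiff, sum_sub_distrib, sum_const, card_univ, Fintype.card_fin, nsmul_eq_mul]
  linear_combination hA

variable (K k) in
def sumZeroLift : (Fin k → K) →ₗ[K] Fin (k + 1) → K :=
  LinearMap.pi <| Fin.lastCases (-((k + 1 : K)⁻¹ • ∑ i, LinearMap.proj i))
    fun i => LinearMap.proj i - (k + 1 : K)⁻¹ • ∑ i, LinearMap.proj i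

variable [CharZero K]

theorem sumZeroLift_lastDiff {A : Fin (k + 1) → K} (hA : ∑ i, A i = 0) :
    sumZeroLift K k (lastDiff A) = A := by
  have hmean : (k + 1 : K)⁻¹ * ∑ i, lastDiff A i = -A (Fin.last k) := by
    rw [sum_lastDiff hA]
    field_simp
  ext j
  induction j using Fin.lastCases with
  | last => simp [sumZeroLift, hmean]
  | cast i =>
    simp [sumZeroLift, hmean]
    simp [lastDiff]

theorem lastDiff_sq_eq {f : Fin (k + 1) → (Fin (k + 1) → K) →ₗ[K] K} {P : Fin (k + 1) → K}
    {AB : (Fin (k + 1) → K) × K} (hAB : AB ∈ quadraticSolutions f P) (i : Fin k) :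
    lastDiff AB.1 i ^ 2 = 2 / (k + 1) * (∑ j, lastDiff AB.1 j) * lastDiff AB.1 i +
      (f i.castSucc - f (Fin.last k)) (sumZeroLift K k (lastDiff AB.1)) +
      (P i.castSucc - P (Fin.last k)) := by
  obtain ⟨hsum, hsq⟩ := hAB
  have hk : (k + 1 : K) ≠ 0 := Nat.cast_add_one_ne_zero k
  rw [sum_lastDiff hsum, sumZeroLift_lastDiff hsum, LinearMap.sub_apply]
  field_simp
  simp only [lastDiff]
  linear_combination hsq i.castSucc - hsq (Fin.last k)

theorem injOn_lastDiff_quadraticSolutions (f : Fin (k + 1) → (Fin (k + 1) → K) →ₗ[K] K)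
    (P : Fin (k + 1) → K) : Set.InjOn (fun AB => lastDiff AB.1) (quadraticSolutions f P) := by
  rintro ⟨A, B⟩ ⟨hA, hsqA⟩ ⟨A', B'⟩ ⟨hA', hsqA'⟩ hAA'
  obtain rfl : A = A' :=
    (sumZeroLift_lastDiff hA).symm.trans ((congrArg _ hAA').trans (sumZeroLift_lastDiff hA'))
  have hB : B = B' := by linear_combination hsqA' (Fin.last k) - hsqA (Fin.last k)
  rw [hB]

theorem quadraticSolutions_finite_and_ncard_le (n : ℕ)
    (f : Fin (2 * n + 1) → (Fin (2 * n + 1) → K) →ₗ[K] K) (P : Fin (2 * n + 1) → K) :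
    (quadraticSolutions f P).Finite ∧ (quadraticSolutions f P).ncard ≤ 2 ^ (2 * n) := by
  set c : K := 2 / ((2 * n : ℕ) + 1)
  set φ := fun i : Fin (2 * n) => (f i.castSucc - f (Fin.last _)) ∘ₗ sumZeroLift K _
  set γ := fun i : Fin (2 * n) => P i.castSucc - P (Fin.last _)
  set T : Set (Fin (2 * n) → K) := {y | ∀ i, y i ^ 2 = c * (∑ j, y j) * y i + φ i y + γ i}
  -- `2 m = 2 n + 1` has no solution: this is where the oddness of `ℓ` enters.
  have hc : ∀ m ≤ 2 * n, c * m ≠ 1 := fun m _ h => by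
    rw [div_mul_eq_mul_div, div_eq_one_iff_eq (Nat.cast_add_one_ne_zero _)] at h
    exact absurd (by exact_mod_cast h) (by omega : 2 * m ≠ 2 * n + 1)
  have hmaps : Set.MapsTo (fun AB => lastDiff AB.1) (quadraticSolutions f P) T :=
    fun _ hAB i => lastDiff_sq_eq hAB i
  have hinj := injOn_lastDiff_quadraticSolutions f P
  have hTfin : T.Finite := finite_of_sq_eq hc φ γ fun _ hy => hy
  exact ⟨hTfin.of_injOn hmaps hinj, (Set.ncard_le_ncard_of_injOn _ hmaps hinj hTfin).trans
    (ncard_le_of_sq_eq hc φ γ (fun _ hy => hy) hTfin)⟩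

end SumZeroSystem

theorem logFreeSet_eq_quadraticSolutions (ω₁ ω₂ : ℂ) (ℓ : ℕ) (p : Fin ℓ → ℂ) :
    logFreeSet ω₁ ω₂ ℓ p = quadraticSolutions
      (fun i => ∑ j ∈ univ.erase i, wzeta ω₁ ω₂ (p i - p j) • LinearMap.proj j)
      (fun i => 3 / 4 * ∑ j ∈ univ.erase i, wp ω₁ ω₂ (p i - p j)) := by
  ext AB
  simp [logFreeSet, quadraticSolutions]

theorem stmt0 (ω₁ ω₂ : ℂ)
    (n : ℕ) (p : Fin (2 * n + 1) → ℂ) :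
    (logFreeSet ω₁ ω₂ (2 * n + 1) p).Finite ∧
      (logFreeSet ω₁ ω₂ (2 * n + 1) p).ncard ≤ 2 ^ (2 * n) := by
  rw [logFreeSet_eq_quadraticSolutions]
  exact quadraticSolutions_finite_and_ncard_le n _ _
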